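/- Suppose h_τ and h are positive self-adjoint operators with Hilbert-Schmidt inverses and ‖h_τ^{-1} - h^{-1}‖_{HS} → 0. Then, uniformly in t ∈ (-1, 1), (1+t)·‖ e^{-t h_τ/τ}/(τ(e^{h_τ/τ}-1)) - h_τ^{-1} ‖_{HS} → 0 as τ → ∞. -/

import Mathlib

/-!
On the `k`-th eigenvector of `h_τ`, with `x = λ_{τ,k}/τ`, the error is `(1+t) ψ_t(x) / τ` where
`ψ_t(x) = e^{-tx}/(e^x - 1) - 1/x`. The elementary bounds `1/x ≤ e^x/(e^x-1) ≤ 1 + 1/x` give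
`|(1+t) ψ_t(x)| ≤ 4 min(1, 1/x)` uniformly in `t ∈ [-1, 1]`, so the squared error is at most
`16 min(1/τ, 1/λ_{τ,k})²`. Its sum tends to zero: comparing with `min(1/τ, 1/λ_k)²` costs
`2 ‖h_τ⁻¹ - h⁻¹‖²_{𝔖²}`, and `∑ min(1/τ, 1/λ_k)² → 0` by dominated convergence.
-/

open Filter Topology

namespace Real

lemma one_div_le_exp_div_exp_sub_one {x : ℝ} (hx : 0 < x) : 1 / x ≤ exp x / (exp x - 1) := by
  have hE : 0 < exp x - 1 := by linarith [add_one_lt_exp hx.ne']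
  rw [div_le_div_iff₀ hx hE]
  nlinarith [add_one_le_exp (-x), exp_neg x, mul_inv_cancel₀ (exp_pos x).ne', exp_pos x]

lemma exp_div_exp_sub_one_le {x : ℝ} (hx : 0 < x) : exp x / (exp x - 1) ≤ 1 + 1 / x := by
  have hE : 0 < exp x - 1 := by linarith [add_one_lt_exp hx.ne']
  rw [div_le_iff₀ hE, one_add_div hx.ne', div_mul_eq_mul_div, le_div_iff₀ hx]
  nlinarith [add_one_le_exp x]

lemma abs_one_add_mul_exp_div_exp_sub_one_sub_one_div_le {t x : ℝ} (ht₀ : -1 ≤ t) (ht₁ : t ≤ 1)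
    (hx : 0 < x) :
    |(1 + t) * (exp (-(t * x)) / (exp x - 1) - 1 / x)| ≤ 4 * min 1 (1 / x) := by
  set s := 1 + t
  set A := exp (-(s * x))
  set y := exp x / (exp x - 1)
  set u := 1 / x
  have hs₀ : 0 ≤ s := by linarith
  have hs₂ : s ≤ 2 := by linarith
  have hsplit : exp (-(t * x)) / (exp x - 1) = A * y := by
    rw [mul_div_assoc', ← exp_add]; congr 2; ring
  have hy₁ : u ≤ y := one_div_le_exp_div_exp_sub_one hx
  have hy₂ : y ≤ 1 + u := exp_div_exp_sub_one_le hx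
  have hA₁ : A ≤ 1 := exp_le_one_iff.mpr (by nlinarith)
  have hA_ge : 1 - s * x ≤ A := by linarith [add_one_le_exp (-(s * x))]
  have hsxA : s * x * A ≤ 1 := by
    calc s * x * A ≤ exp (s * x) * A := by gcongr; linarith [add_one_le_exp (s * x)]
      _ = 1 := by rw [← exp_add]; simp
  have hu : 0 < u := by positivity
  have hux : x * u = 1 := mul_one_div_cancel hx.ne'
  have hlo : s * (A * u - u) ≤ s * (A * y - u) := by gcongr
  have hup : s * (A * y - u) ≤ s * (A * (1 + u) - u) := by gcongr
  have hu_one_sub_A : u * (1 - A) ≤ s := by nlinarith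
  have hsA : s * A ≤ u := by nlinarith
  rw [hsplit, abs_le]
  rcases le_total 1 u with h | h
  · rw [min_eq_left h]
    constructor <;> nlinarith [mul_le_mul_of_nonneg_left hu_one_sub_A hs₀]
  · rw [min_eq_right h]
    constructor <;> nlinarith

lemma abs_one_add_mul_exp_div_sub_one_div_le {t τ l : ℝ} (ht₀ : -1 ≤ t) (ht₁ : t ≤ 1)
    (hτ : 0 < τ) (hl : 0 < l) :
    |(1 + t) * (exp (-(t * l / τ)) / (τ * (exp (l / τ) - 1)) - 1 / l)| ≤
      4 * min (1 / τ) (1 / l) := by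
  have hE : 0 < exp (l / τ) - 1 := by
    linarith [add_one_lt_exp (div_pos hl hτ).ne', div_pos hl hτ]
  have hrescale : (1 + t) * (exp (-(t * l / τ)) / (τ * (exp (l / τ) - 1)) - 1 / l) =
      (1 + t) * (exp (-(t * (l / τ))) / (exp (l / τ) - 1) - 1 / (l / τ)) / τ := by
    field_simp
  have hmin : min (1 / τ) (1 / l) = min 1 (1 / (l / τ)) / τ := by
    rw [← min_div_div_right hτ.le]; field_simp
  rw [hrescale, hmin, abs_div, abs_of_pos hτ, ← mul_div_assoc (4 : ℝ)]
  refine div_le_div_of_nonneg_right ?_ hτ.le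
  exact abs_one_add_mul_exp_div_exp_sub_one_sub_one_div_le ht₀ ht₁ (div_pos hl hτ)

end Real

lemma min_abs_sq_le_two_mul_min_abs_sq_add {c : ℝ} (hc : 0 ≤ c) (x y : ℝ) :
    min c |x| ^ 2 ≤ 2 * min c |y| ^ 2 + 2 * (x - y) ^ 2 := by
  have hmin : min c |x| ≤ min c |y| + |x - y| := by
    have := abs_sub_abs_le_abs_sub x y
    rcases le_total c |y| with h | h
    · rw [min_eq_left h]; exact (min_le_left _ _).trans (le_add_of_nonneg_right (abs_nonneg _))
    · rw [min_eq_right h]; exact (min_le_right _ _).trans (by linarith)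
  have h₀ : 0 ≤ min c |x| := le_min hc (abs_nonneg _)
  nlinarith [sq_abs (x - y), sq_nonneg (min c |y| - |x - y|)]

lemma summable_sub_sq {ι : Type*} {a b : ι → ℝ} (ha : Summable fun k => a k ^ 2)
    (hb : Summable fun k => b k ^ 2) : Summable fun k => (a k - b k) ^ 2 :=
  .of_nonneg_of_le (fun _ => sq_nonneg _) (fun k => by nlinarith [sq_nonneg (a k + b k)])
    ((ha.mul_left 2).add (hb.mul_left 2))

lemma summable_min_abs_sq {ι : Type*} {c : ℝ} {b : ι → ℝ} (hc : 0 ≤ c)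
    (hb : Summable fun k => b k ^ 2) :
    Summable fun k => min c |b k| ^ 2 :=
  .of_nonneg_of_le (fun _ => sq_nonneg _)
    (fun _ => (pow_le_pow_left₀ (le_min hc (abs_nonneg _)) (min_le_right _ _) 2).trans
      (sq_abs _).le) hb

section MinSq

variable {α ι : Type*} {l : Filter α} {c : α → ℝ} {b : ι → ℝ}

lemma tendsto_tsum_min_abs_sq_zero (hc : Tendsto c l (𝓝 0)) (hc₀ : ∀ᶠ τ in l, 0 ≤ c τ)
    (hb : Summable fun k => b k ^ 2) :
    Tendsto (fun τ => ∑' k, min (c τ) |b k| ^ 2) l (𝓝 0) := by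
  have hpointwise (k : ι) : Tendsto (fun τ => min (c τ) |b k| ^ 2) l (𝓝 0) := by
    simpa [min_eq_left (abs_nonneg (b k))] using (hc.min (tendsto_const_nhds (x := |b k|))).pow 2
  have hdominated : ∀ᶠ τ in l, ∀ k, ‖min (c τ) |b k| ^ 2‖ ≤ b k ^ 2 := by
    filter_upwards [hc₀] with τ hτ k
    rw [Real.norm_of_nonneg (sq_nonneg _), ← sq_abs (b k)]
    exact pow_le_pow_left₀ (le_min hτ (abs_nonneg _)) (min_le_right _ _) 2
  simpa using tendsto_tsum_of_dominated_convergence hb hpointwise hdominated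

lemma tendsto_tsum_min_abs_sq_zero_of_tendsto_tsum_sub_sq {a : α → ι → ℝ}
    (hc : Tendsto c l (𝓝 0)) (hc₀ : ∀ᶠ τ in l, 0 ≤ c τ) (hb : Summable fun k => b k ^ 2)
    (hab_summable : ∀ᶠ τ in l, Summable fun k => (a τ k - b k) ^ 2)
    (hab : Tendsto (fun τ => ∑' k, (a τ k - b k) ^ 2) l (𝓝 0)) :
    Tendsto (fun τ => ∑' k, min (c τ) |a τ k| ^ 2) l (𝓝 0) := by
  have hlim : Tendsto (fun τ => 2 * ∑' k, min (c τ) |b k| ^ 2 + 2 * ∑' k, (a τ k - b k) ^ 2)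
      l (𝓝 0) := by
    simpa using ((tendsto_tsum_min_abs_sq_zero hc hc₀ hb).const_mul 2).add (hab.const_mul 2)
  refine squeeze_zero' (.of_forall fun τ => tsum_nonneg fun _ => sq_nonneg _) ?_ hlim
  filter_upwards [hc₀, hab_summable] with τ hτ hsum
  have hmajorant := ((summable_min_abs_sq hτ hb).mul_left 2).add (hsum.mul_left 2)
  calc ∑' k, min (c τ) |a τ k| ^ 2
      ≤ ∑' k, (2 * min (c τ) |b k| ^ 2 + 2 * (a τ k - b k) ^ 2) :=
        Summable.tsum_le_tsum (fun k => min_abs_sq_le_two_mul_min_abs_sq_add hτ _ _)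
          (.of_nonneg_of_le (fun _ => sq_nonneg _)
            (fun k => min_abs_sq_le_two_mul_min_abs_sq_add hτ _ _) hmajorant) hmajorant
    _ = 2 * ∑' k, min (c τ) |b k| ^ 2 + 2 * ∑' k, (a τ k - b k) ^ 2 := by
        rw [Summable.tsum_add (summable_min_abs_sq hτ hb |>.mul_left 2) (hsum.mul_left 2),
          tsum_mul_left, tsum_mul_left]

end MinSq

lemma mul_sqrt_tsum_sq_le {ι : Type*} {s C : ℝ} {e m : ι → ℝ} (hs : 0 ≤ s) (hC : 0 ≤ C)
    (hm : Summable fun k => m k ^ 2) (h : ∀ k, |s * e k| ≤ C * m k) :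
    s * √(∑' k, e k ^ 2) ≤ C * √(∑' k, m k ^ 2) := by
  have hsq (k : ι) : s ^ 2 * e k ^ 2 ≤ C ^ 2 * m k ^ 2 := by
    rw [← mul_pow, ← mul_pow, ← sq_abs (s * e k)]
    exact pow_le_pow_left₀ (abs_nonneg _) (h k) 2
  calc s * √(∑' k, e k ^ 2) = √(∑' k, s ^ 2 * e k ^ 2) := by
        rw [tsum_mul_left, Real.sqrt_mul (sq_nonneg _), Real.sqrt_sq hs]
    _ ≤ √(∑' k, C ^ 2 * m k ^ 2) :=
        Real.sqrt_le_sqrt <| Summable.tsum_le_tsum hsq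
          (.of_nonneg_of_le (fun _ => by positivity) hsq (hm.mul_left _)) (hm.mul_left _)
    _ = C * √(∑' k, m k ^ 2) := by
        rw [tsum_mul_left, Real.sqrt_mul (sq_nonneg _), Real.sqrt_sq hC]

lemma tendstoUniformlyOn_zero_of_abs_le {α β : Type*} {l : Filter α} {F : α → β → ℝ}
    {g : α → ℝ} {s : Set β} (hg : Tendsto g l (𝓝 0)) (hF : ∀ᶠ τ in l, ∀ t ∈ s, |F τ t| ≤ g τ) :
    TendstoUniformlyOn F (fun _ => 0) l s := by
  rw [Metric.tendstoUniformlyOn_iff]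
  intro ε hε
  filter_upwards [hF, hg (Iio_mem_nhds hε)] with τ hτ hgε t ht
  rw [dist_comm, Real.dist_0_eq_abs]
  exact (hτ t ht).trans_lt hgε

theorem stmt8_general (lamτ : ℝ → ℕ → ℝ) (lam : ℕ → ℝ)
    (hposτ : ∀ τ : ℝ, 0 < τ → ∀ k, 0 < lamτ τ k)
    (hHS : Summable fun k => (1 / lam k) ^ 2)
    (hHSτ : ∀ τ : ℝ, 0 < τ → Summable fun k => (1 / lamτ τ k) ^ 2)
    (hconv : Tendsto (fun τ : ℝ => ∑' k, (1 / lamτ τ k - 1 / lam k) ^ 2) atTop (nhds 0)) :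
    TendstoUniformlyOn
      (fun τ : ℝ => fun t : ℝ =>
        (1 + t) * Real.sqrt (∑' k,
          (Real.exp (-(t * lamτ τ k / τ)) / (τ * (Real.exp (lamτ τ k / τ) - 1))
            - 1 / lamτ τ k) ^ 2))
      (fun _ => 0) atTop (Set.Ioo (-1) 1) := by
  have hS : Tendsto (fun τ : ℝ => ∑' k, min (1 / τ) |1 / lamτ τ k| ^ 2) atTop (𝓝 0) :=
    tendsto_tsum_min_abs_sq_zero_of_tendsto_tsum_sub_sq
      (tendsto_const_nhds.div_atTop tendsto_id)
      ((eventually_ge_atTop 0).mono fun τ hτ => by positivity) hHS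
      ((eventually_gt_atTop 0).mono fun τ hτ => summable_sub_sq (hHSτ τ hτ) hHS) hconv
  refine tendstoUniformlyOn_zero_of_abs_le
    (g := fun τ => 4 * √(∑' k, min (1 / τ) |1 / lamτ τ k| ^ 2))
    (by simpa using hS.sqrt.const_mul 4) ?_
  filter_upwards [eventually_gt_atTop 0] with τ hτ t ⟨ht₀, ht₁⟩
  rw [abs_of_nonneg (mul_nonneg (by linarith) (Real.sqrt_nonneg _))]
  refine mul_sqrt_tsum_sq_le (by linarith) (by norm_num)
    (summable_min_abs_sq (by positivity) (hHSτ τ hτ)) fun k => ?_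
  have hl := hposτ τ hτ k
  rw [abs_of_pos (one_div_pos.mpr hl)]
  exact Real.abs_one_add_mul_exp_div_sub_one_div_le ht₀.le ht₁.le hτ hl

/-- If the (positive) eigenvalues `lamτ τ k` of `h_τ` and `lam k` of `h` have square-summable
inverses and `∑_k (1/lamτ τ k - 1/lam k)² → 0`, then, uniformly in `t ∈ (-1,1)`,
`(1+t) · ‖e^{-t h_τ/τ}/(τ(e^{h_τ/τ}-1)) - h_τ⁻¹‖_{𝔖²} → 0` as `τ → ∞`, the Hilbert-Schmidt
norm being expressed spectrally. -/
theorem stmt8 (lamτ : ℝ → ℕ → ℝ) (lam : ℕ → ℝ)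
    (hposτ : ∀ τ : ℝ, 0 < τ → ∀ k, 0 < lamτ τ k) (hpos : ∀ k, 0 < lam k)
    (hHS : Summable fun k => (1 / lam k) ^ 2)
    (hHSτ : ∀ τ : ℝ, 0 < τ → Summable fun k => (1 / lamτ τ k) ^ 2)
    (hconv : Tendsto (fun τ : ℝ => ∑' k, (1 / lamτ τ k - 1 / lam k) ^ 2) atTop (nhds 0)) :
    TendstoUniformlyOn
      (fun τ : ℝ => fun t : ℝ =>
        (1 + t) * Real.sqrt (∑' k,
          (Real.exp (-(t * lamτ τ k / τ)) / (τ * (Real.exp (lamτ τ k / τ) - 1))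
            - 1 / lamτ τ k) ^ 2))
      (fun _ => 0) atTop (Set.Ioo (-1) 1) :=
  stmt8_general lamτ lam hposτ hHS hHSτ hconv
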